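/- Let X be a norm on ℝ² ≅ ℂ such that the open unit ball of X is disjoint from the perpendicular line ℓ_v = v + span(iv) for every v on the unit circle of X. Then X is a positive scalar multiple of the Euclidean norm. -/

import Mathlib

open Set

noncomputable section

/-- `N` is a norm on the real vector space `E`. -/
structure IsNorm {E : Type*} [AddCommGroup E] [Module ℝ E] (N : E → ℝ) : Prop where
  eq_zero_iff : ∀ v : E, N v = 0 ↔ v = 0
  smul_eq : ∀ (c : ℝ) (v : E), N (c • v) = |c| * N v
  add_le : ∀ u v : E, N (u + v) ≤ N u + N v

/-- Length of the path `φ` on `[a, b]`, with respect to the (norm) function `N`: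
the supremum over partitions `a = t 0 ≤ ⋯ ≤ t n = b` of the sums of distances. -/
noncomputable def pathLen {E : Type*} [AddCommGroup E] [Module ℝ E] (N : E → ℝ)
    (φ : ℝ → E) (a b : ℝ) : ENNReal :=
  ⨆ (n : ℕ) (t : Fin (n + 1) → ℝ) (_ : Monotone t) (_ : t 0 = a)
    (_ : t (Fin.last n) = b),
    ∑ i : Fin n, ENNReal.ofReal (N (φ (t i.succ) - φ (t i.castSucc)))

/-- `φ` is a parametrization of the boundary loop of `B ⊆ ℝ² = ℂ`. -/
def IsBoundaryParam (B : Set ℂ) (φ : ℝ → ℂ) : Prop :=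
  Continuous φ ∧ (∀ t : ℝ, φ (t + 1) = φ t) ∧ Set.InjOn φ (Set.Ico 0 1) ∧
    φ '' Set.Ico 0 1 = frontier B

/-- A convex body in the plane: compact, convex, with nonempty interior. -/
def IsConvexBody (B : Set ℂ) : Prop :=
  IsCompact B ∧ Convex ℝ B ∧ (interior B).Nonempty

/-- `C` is a convex arc from `u` to `v`: either the segment `[u, v]`, or a set whose
union with the segment `[v, u]` is the boundary of a convex body (meeting the
segment only at the endpoints). -/
def IsConvexArc (C : Set ℂ) (u v : ℂ) : Prop :=
  u ∈ C ∧ v ∈ C ∧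
    (C = segment ℝ u v ∨
      ∃ B : Set ℂ, IsConvexBody B ∧ C ∪ segment ℝ v u = frontier B ∧
        C ∩ segment ℝ v u = {u, v})

/-- `φ` is a convex path from `u` to `v`, parametrized on `[0, 1]`. -/
def IsConvexPath (φ : ℝ → ℂ) (u v : ℂ) : Prop :=
  Continuous φ ∧ φ 0 = u ∧ φ 1 = v ∧ Set.InjOn φ (Set.Icc 0 1) ∧
    IsConvexArc (φ '' Set.Icc 0 1) u v

/-! After rescaling, the hypothesis says that `N` does not decrease along any line through `w`
perpendicular to `w`. Rotating `w` by `s` is scaling by `cos s` the point `w + tan s • (I * w)` of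
that line, so `g θ = N (exp (θ * I))` satisfies `cos s * g θ ≤ g (θ + s)`. As `g` is bounded,
`|g (θ + s) - g θ| = O(s ^ 2)`, hence `g` has derivative zero and is constant. -/

open Complex Asymptotics Topology

theorem hasDerivAt_zero_of_norm_sub_le_mul_sq {𝕜 G : Type*} [NontriviallyNormedField 𝕜]
    [NormedAddCommGroup G] [NormedSpace 𝕜 G] {f : 𝕜 → G} {C : ℝ}
    (hf : ∀ x h, ‖f (x + h) - f x‖ ≤ C * ‖h‖ ^ 2) (x : 𝕜) : HasDerivAt f 0 x := by
  rw [hasDerivAt_iff_isLittleO_nhds_zero]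
  have hO : (fun h => f (x + h) - f x - h • (0 : G)) =O[𝓝 0] fun h : 𝕜 => h ^ 2 :=
    IsBigO.of_bound C (Filter.Eventually.of_forall fun h => by simpa using hf x h)
  exact hO.trans_isLittleO (isLittleO_pow_id one_lt_two)

theorem is_const_of_norm_sub_le_mul_sq {𝕜 G : Type*} [RCLike 𝕜]
    [NormedAddCommGroup G] [NormedSpace 𝕜 G] {f : 𝕜 → G} {C : ℝ}
    (hf : ∀ x h, ‖f (x + h) - f x‖ ≤ C * ‖h‖ ^ 2) (x y : 𝕜) : f x = f y :=
  is_const_of_deriv_eq_zero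
    (fun z => (hasDerivAt_zero_of_norm_sub_le_mul_sq hf z).differentiableAt)
    (fun z => (hasDerivAt_zero_of_norm_sub_le_mul_sq hf z).deriv) x y

namespace IsNorm

section

variable {E : Type*} [AddCommGroup E] [Module ℝ E] {N : E → ℝ}

theorem map_zero (hN : IsNorm N) : N 0 = 0 :=
  (hN.eq_zero_iff 0).2 rfl

theorem map_neg (hN : IsNorm N) (v : E) : N (-v) = N v := by
  simpa using hN.smul_eq (-1) v

theorem nonneg (hN : IsNorm N) (v : E) : 0 ≤ N v := by
  have h := hN.add_le v (-v)
  rw [add_neg_cancel, hN.map_zero, hN.map_neg] at h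
  linarith

theorem pos (hN : IsNorm N) {v : E} (hv : v ≠ 0) : 0 < N v :=
  (hN.nonneg v).lt_of_ne fun h => hv ((hN.eq_zero_iff v).1 h.symm)

end

variable {N : ℂ → ℝ}

theorem le_add_smul_I_mul (hN : IsNorm N)
    (htangent : ∀ v : ℂ, N v = 1 → ∀ t : ℝ, ¬ N (v + t • (I * v)) < 1) (w : ℂ) (t : ℝ) :
    N w ≤ N (w + t • (I * w)) := by
  rcases eq_or_ne w 0 with rfl | hw
  · simp
  have hNw := hN.pos hw
  have hunit : N ((N w)⁻¹ • w) = 1 := by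
    rw [hN.smul_eq, abs_of_pos (inv_pos.2 hNw), inv_mul_cancel₀ hNw.ne']
  have h := not_lt.1 (htangent _ hunit t)
  simp only [mul_smul_comm, smul_comm t, ← smul_add] at h
  rwa [hN.smul_eq, abs_of_pos (inv_pos.2 hNw), le_inv_mul_iff₀ hNw, mul_one] at h

theorem cos_mul_le_exp_mul_I_mul (hN : IsNorm N)
    (hperp : ∀ (w : ℂ) (t : ℝ), N w ≤ N (w + t • (I * w))) (s : ℝ) (w : ℂ) :
    Real.cos s * N w ≤ N (exp (s * I) * w) := by
  rcases le_or_gt (Real.cos s) 0 with hc | hc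
  · exact (mul_nonpos_of_nonpos_of_nonneg hc (hN.nonneg w)).trans (hN.nonneg _)
  have hrot : exp (s * I) * w = Real.cos s • (w + Real.tan s • (I * w)) := by
    have hc' : cos s ≠ 0 := by exact_mod_cast hc.ne'
    rw [exp_mul_I, Real.tan_eq_sin_div_cos]
    simp only [real_smul]
    push_cast
    field_simp
  rw [hrot, hN.smul_eq, abs_of_pos hc]
  exact mul_le_mul_of_nonneg_left (hperp w _) hc.le

theorem apply_exp_mul_I_le (hN : IsNorm N) (θ : ℝ) : N (exp (θ * I)) ≤ N 1 + N I := by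
  have hexp : exp (θ * I) = Real.cos θ • (1 : ℂ) + Real.sin θ • I := by
    rw [exp_mul_I, ← ofReal_cos, ← ofReal_sin]
    simp [real_smul]
  calc N (exp (θ * I)) ≤ |Real.cos θ| * N 1 + |Real.sin θ| * N I := by
        rw [hexp, ← hN.smul_eq, ← hN.smul_eq]
        exact hN.add_le _ _
    _ ≤ 1 * N 1 + 1 * N I := by
        gcongr
        exacts [hN.nonneg 1, Real.abs_cos_le_one θ, hN.nonneg I, Real.abs_sin_le_one θ]
    _ = N 1 + N I := by ring

theorem abs_apply_exp_mul_I_add_sub_le (hN : IsNorm N)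
    (hperp : ∀ (w : ℂ) (t : ℝ), N w ≤ N (w + t • (I * w))) (θ s : ℝ) :
    |N (exp ((θ + s : ℝ) * I)) - N (exp (θ * I))| ≤ (N 1 + N I) * s ^ 2 := by
  have hadd (a b : ℝ) : exp ((a + b : ℝ) * I) = exp (b * I) * exp (a * I) := by
    rw [ofReal_add, add_mul, exp_add, mul_comm]
  have hfwd := hN.cos_mul_le_exp_mul_I_mul hperp s (exp (θ * I))
  have hback := hN.cos_mul_le_exp_mul_I_mul hperp (-s) (exp ((θ + s : ℝ) * I))
  rw [← hadd] at hfwd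
  rw [← hadd, add_neg_cancel_right, Real.cos_neg] at hback
  have hcos : 1 - s ^ 2 / 2 ≤ Real.cos s := Real.one_sub_sq_div_two_le_cos
  have hcos' : Real.cos s ≤ 1 := Real.cos_le_one s
  have h0 := hN.nonneg (exp (θ * I))
  have h1 := hN.nonneg (exp ((θ + s : ℝ) * I))
  have hb0 := hN.apply_exp_mul_I_le θ
  have hb1 := hN.apply_exp_mul_I_le (θ + s)
  rw [abs_sub_le_iff]
  constructor <;> nlinarith [sq_nonneg s]

end IsNorm

/-- If, for every `v` on the unit circle of `N`, the open unit ball of `N` is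
disjoint from the line through `v` perpendicular (Euclideanly) to `[0, v]`,
then `N` is a positive multiple of the Euclidean norm. -/
theorem stmt18 (N : ℂ → ℝ) (hN : IsNorm N)
    (htangent : ∀ v : ℂ, N v = 1 → ∀ t : ℝ, ¬ N (v + t • (Complex.I * v)) < 1) :
    ∃ c : ℝ, 0 < c ∧ ∀ z : ℂ, N z = c * ‖z‖ := by
  have hperp := hN.le_add_smul_I_mul htangent
  have hconst : ∀ θ : ℝ, N (exp (θ * I)) = N 1 := fun θ => by
    simpa using is_const_of_norm_sub_le_mul_sq (f := fun θ : ℝ => N (exp (θ * I)))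
      (fun θ s => by simpa using hN.abs_apply_exp_mul_I_add_sub_le hperp θ s) θ 0
  refine ⟨N 1, hN.pos one_ne_zero, fun z => ?_⟩
  calc N z = N (‖z‖ • exp (z.arg * I)) := by rw [real_smul, norm_mul_exp_arg_mul_I]
    _ = N 1 * ‖z‖ := by rw [hN.smul_eq, abs_norm, hconst, mul_comm]

end
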